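/- arXiv:2112.00217 — 4 statements merged into one kernel-verified Lean document; each statement's English description precedes it below -/
import Mathlib

section
/- Let n ≥ 1, 0 < λ < 1 and 0 < p < n/(1+nλ). Let Ω ⊂ ℝ^n be a bounded open set and S ⊂ Ω a measurable set of positive Lebesgue measure. Then there exists NO constant C such that ‖ w − ( (1/|S|) ∫_S w^{1/λ} )^{λ} ‖_{L^p(Ω)} ≤ C ‖∇w‖_{L^p(Ω)} holds for all nonnegative Lipschitz functions w on Ω. Equivalently, there exists a sequence of nonnegative Lipschitz functions w_k with ‖∇w_k‖_{L^p(Ω)} → 0 while ‖ w_k − ((1/|S|)∫_S w_k^{1/λ})^{λ} ‖_{L^p(Ω)} stays bounded below by a positive constant. -/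
open MeasureTheory Real Set

noncomputable section

/-!
Near a Lebesgue density point `c` of `S`, take the tent `w` of radius `r` and height
`r ^ (-λ d)`, `d` the dimension. The height makes `w ^ (1/λ)` of size `r ^ (-d)` on
`S ∩ closedBall c (r/2)`, a set of measure comparable to `r ^ d`, so the `1/λ`-average of `w`
over `S` stays bounded below as `r → 0`. As `w` vanishes off `closedBall c r`,
`|w - (⨍ w ^ (1/λ)) ^ λ|` is then bounded below on most of `Ω`. On the other hand
`‖∇w‖ ≤ r ^ (-λ d - 1)` on `closedBall c r`, so `∫ ‖∇w‖ ^ p ≲ r ^ (d - p (1 + d λ))`, which tends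
to `0` exactly when `p < d / (1 + d λ)`.
-/

open Metric Filter Topology Module
open scoped ENNReal

def tent {X : Type*} [PseudoMetricSpace X] (c : X) (r h : ℝ) (x : X) : ℝ :=
  h * max 0 (1 - dist x c / r)

section Tent

variable {X : Type*} [PseudoMetricSpace X] (c : X) {r h : ℝ}

theorem tent_nonneg (hh : 0 ≤ h) (x : X) : 0 ≤ tent c r h x :=
  mul_nonneg hh (le_max_left _ _)

theorem tent_eq_zero_of_notMem_closedBall (hr : 0 < r) {x : X} (hx : x ∉ closedBall c r) :
    tent c r h x = 0 := by
  rw [mem_closedBall, not_le] at hx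
  rw [tent, max_eq_left (sub_nonpos.2 ((one_le_div hr).2 hx.le)), mul_zero]

theorem half_le_tent_of_dist_le (hr : 0 < r) (hh : 0 ≤ h) {x : X} (hx : dist x c ≤ r / 2) :
    h / 2 ≤ tent c r h x := by
  have : dist x c / r ≤ 1 / 2 := by rw [div_le_iff₀ hr]; linarith
  rw [tent, div_eq_mul_one_div]
  gcongr
  exact le_max_of_le_right (by linarith)

theorem lipschitzWith_tent (hr : 0 < r) (hh : 0 ≤ h) :
    LipschitzWith (h / r).toNNReal (tent c r h) := by
  refine LipschitzWith.of_dist_le_mul fun x y => ?_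
  rw [Real.coe_toNNReal _ (by positivity), Real.dist_eq, tent, tent, ← mul_sub, abs_mul,
    abs_of_nonneg hh]
  calc h * |max 0 (1 - dist x c / r) - max 0 (1 - dist y c / r)|
      ≤ h * |dist x c / r - dist y c / r| := by
        refine mul_le_mul_of_nonneg_left ?_ hh
        rw [max_comm 0, max_comm 0, abs_sub_comm (dist x c / r)]
        exact (abs_max_sub_max_le_abs _ _ _).trans_eq (by ring_nf)
    _ = h / r * |dist x c - dist y c| := by rw [← sub_div, abs_div, abs_of_pos hr]; ring
    _ ≤ h / r * dist x y := by gcongr; exact abs_dist_sub_le x y c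

theorem continuous_tent (hr : 0 < r) (hh : 0 ≤ h) : Continuous (tent c r h) :=
  (lipschitzWith_tent c hr hh).continuous

end Tent

section TentDeriv

variable {E : Type*} [NormedAddCommGroup E] [NormedSpace ℝ E] (c : E) {r h : ℝ}

theorem fderiv_tent_eq_zero (hr : 0 < r) {x : E} (hx : x ∉ closedBall c r) :
    fderiv ℝ (tent c r h) x = 0 := by
  have hzero : tent c r h =ᶠ[𝓝 x] fun _ => 0 := by
    filter_upwards [isClosed_closedBall.isOpen_compl.mem_nhds hx] with y hy
    exact tent_eq_zero_of_notMem_closedBall c hr hy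
  rw [hzero.fderiv_eq, fderiv_const_apply]

theorem norm_fderiv_tent_le (hr : 0 < r) (hh : 0 ≤ h) (x : E) :
    ‖fderiv ℝ (tent c r h) x‖ ≤ h / r := by
  simpa [Real.coe_toNNReal _ (div_nonneg hh hr.le)] using
    norm_fderiv_le_of_lipschitz ℝ (lipschitzWith_tent c hr hh) (x₀ := x)

end TentDeriv

section Integral

variable {α : Type*} [MeasurableSpace α] {μ : Measure α} {f : α → ℝ} {t : Set α} {c : ℝ}

theorem mul_measureReal_le_integral_of_le (hf : Integrable f μ) (hf0 : 0 ≤ᵐ[μ] f)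
    (ht : MeasurableSet t) (hμt : μ t ≠ ∞) (hc : ∀ x ∈ t, c ≤ f x) :
    c * μ.real t ≤ ∫ x, f x ∂μ :=
  (setIntegral_ge_of_const_le_real ht hμt hc hf.integrableOn).trans
    (setIntegral_le_integral hf hf0)

theorem integral_le_mul_measureReal_of_le (hf0 : 0 ≤ᵐ[μ] f) (ht : MeasurableSet t)
    (hμt : μ t ≠ ∞) (hc : ∀ x ∈ t, f x ≤ c) (hft : ∀ x ∉ t, f x = 0) :
    ∫ x, f x ∂μ ≤ c * μ.real t := by
  have hle : f ≤ t.indicator fun _ => c := fun x => by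
    by_cases hx : x ∈ t
    · simpa [hx] using hc x hx
    · simp [hx, hft x hx]
  calc ∫ x, f x ∂μ ≤ ∫ x, t.indicator (fun _ => c) x ∂μ :=
        integral_mono_of_nonneg hf0 ((integrable_indicator_iff ht).2 (integrableOn_const hμt))
          (ae_of_all _ hle)
    _ = c * μ.real t := by rw [integral_indicator_const _ ht, smul_eq_mul, mul_comm]

theorem Continuous.integrableOn_of_isBounded {X : Type*} [PseudoMetricSpace X] [ProperSpace X]
    [MeasurableSpace X] [OpensMeasurableSpace X] {μ : Measure X} [IsFiniteMeasureOnCompacts μ]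
    {f : X → ℝ} (hf : Continuous f) {s : Set X} (hs : Bornology.IsBounded s) :
    IntegrableOn f s μ :=
  (hf.locallyIntegrable.integrableOn_isCompact hs.isCompact_closure).mono_set subset_closure

end Integral

theorem exists_eventually_half_measureReal_closedBall_le {β : Type*} [MetricSpace β]
    [ProperSpace β] [HasBesicovitchCovering β] [MeasurableSpace β] [BorelSpace β]
    (μ : Measure β) [IsFiniteMeasureOnCompacts μ] {s : Set β} (hs : μ s ≠ 0) :
    ∃ c, ∀ᶠ ρ in 𝓝[>] 0, μ.real (closedBall c ρ) / 2 ≤ μ.real (s ∩ closedBall c ρ) := by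
  have : (ae (μ.restrict s)).NeBot := ae_restrict_neBot.2 hs
  obtain ⟨c, hc⟩ := (Besicovitch.ae_tendsto_measure_inter_div μ s).exists
  refine ⟨c, ?_⟩
  filter_upwards [hc.eventually (lt_mem_nhds (by norm_num : (2⁻¹ : ℝ≥0∞) < 1))] with ρ hρ
  have hfin : μ (s ∩ closedBall c ρ) ≠ ∞ :=
    measure_ne_top_of_subset inter_subset_right measure_closedBall_lt_top.ne
  simpa [div_eq_inv_mul, measureReal_def] using
    ENNReal.toReal_mono hfin (ENNReal.mul_lt_of_lt_div hρ).le

section AddHaar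

variable {E : Type*} [NormedAddCommGroup E] [NormedSpace ℝ E] [FiniteDimensional ℝ E]
  [MeasurableSpace E] [BorelSpace E] (μ : Measure E) [μ.IsAddHaarMeasure] (c : E) {r lam p : ℝ}

local notation "d" => finrank ℝ E

theorem div_le_average_rpow_tent (hr : 0 < r) (hlam : 0 < lam) {S : Set E}
    (hS : Bornology.IsBounded S)
    (hdens : μ.real (closedBall c (r / 2)) / 2 ≤ μ.real (S ∩ closedBall c (r / 2))) :
    μ.real (ball (0 : E) 1) / (2 ^ (1 / lam) * 2 ^ d * 2 * μ.real S)
      ≤ ⨍ y in S, tent c r (r ^ (-(lam * d))) y ^ (1 / lam) ∂μ := by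
  set h := r ^ (-(lam * d))
  have hh : 0 < h := rpow_pos_of_pos hr _
  have hhq : h ^ (1 / lam) = (r ^ d)⁻¹ := by
    rw [← rpow_mul hr.le, ← rpow_natCast, ← rpow_neg hr.le]
    congr 1
    field_simp
  have hint : Integrable (fun y => tent c r h y ^ (1 / lam)) (μ.restrict S) :=
    ((continuous_tent c hr hh.le).rpow_const fun _ => Or.inr (by positivity)
      ).integrableOn_of_isBounded hS
  have hlow : (h / 2) ^ (1 / lam) * μ.real (S ∩ closedBall c (r / 2))
      ≤ ∫ y in S, tent c r h y ^ (1 / lam) ∂μ := by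
    rw [inter_comm, ← measureReal_restrict_apply measurableSet_closedBall]
    refine mul_measureReal_le_integral_of_le hint
      (ae_of_all _ fun y => rpow_nonneg (tent_nonneg c hh.le y) _) measurableSet_closedBall
      measure_closedBall_lt_top.ne fun y hy =>
        rpow_le_rpow (by positivity) (half_le_tent_of_dist_le c hr hh.le hy) (by positivity)
  rw [Measure.addHaar_real_closedBall μ c (by positivity)] at hdens
  rw [setAverage_eq, smul_eq_mul]
  calc μ.real (ball (0 : E) 1) / (2 ^ (1 / lam) * 2 ^ d * 2 * μ.real S)
      = (μ.real S)⁻¹ * ((h / 2) ^ (1 / lam) * ((r / 2) ^ d * μ.real (ball (0 : E) 1) / 2)) := by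
        rw [div_rpow hh.le zero_le_two, hhq, div_pow]
        field_simp
    _ ≤ _ := mul_le_mul_of_nonneg_left (le_trans (by gcongr) hlow) (by positivity)

theorem setIntegral_rpow_norm_fderiv_tent_le (hr : 0 < r) (hp : 0 < p) (Ω : Set E) :
    ∫ x in Ω, ‖fderiv ℝ (tent c r (r ^ (-(lam * d)))) x‖ ^ p ∂μ
      ≤ μ.real (ball (0 : E) 1) * r ^ ((d : ℝ) - p * (1 + d * lam)) := by
  set h := r ^ (-(lam * d))
  have hh : 0 < h := rpow_pos_of_pos hr _
  calc ∫ x in Ω, ‖fderiv ℝ (tent c r h) x‖ ^ p ∂μ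
      ≤ (h / r) ^ p * (μ.restrict Ω).real (closedBall c r) :=
        integral_le_mul_measureReal_of_le (ae_of_all _ fun x => by positivity)
          measurableSet_closedBall measure_closedBall_lt_top.ne
          (fun x _ => rpow_le_rpow (norm_nonneg _) (norm_fderiv_tent_le c hr hh.le x) hp.le)
          fun x hx => by rw [fderiv_tent_eq_zero c hr hx, norm_zero, zero_rpow hp.ne']
    _ ≤ (h / r) ^ p * μ.real (closedBall c r) := by
        rw [measureReal_restrict_apply measurableSet_closedBall]
        gcongr
        · exact measure_closedBall_lt_top.ne
        · exact inter_subset_left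
    _ = μ.real (ball (0 : E) 1) * r ^ ((d : ℝ) - p * (1 + d * lam)) := by
        rw [Measure.addHaar_real_closedBall μ c hr.le, ← rpow_natCast,
          ← rpow_sub_one hr.ne', ← rpow_mul hr.le, ← mul_assoc, ← rpow_add hr, mul_comm]
        ring_nf

theorem mul_half_measureReal_le_setIntegral_rpow_abs_tent_sub {h m M : ℝ} {Ω : Set E}
    (hΩ : Bornology.IsBounded Ω) (hr : 0 < r) (hh : 0 ≤ h) (hp : 0 < p) (hm : 0 ≤ m)
    (hmM : m ≤ M) (hball : μ.real (closedBall c r) ≤ μ.real Ω / 2) :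
    m ^ p * (μ.real Ω / 2) ≤ ∫ x in Ω, |tent c r h x - M| ^ p ∂μ := by
  have hΩfin : μ Ω ≠ ∞ := hΩ.measure_lt_top.ne
  have hint : Integrable (fun x => |tent c r h x - M| ^ p) (μ.restrict Ω) :=
    (((continuous_tent c hr hh).sub continuous_const).abs.rpow_const
      fun _ => Or.inr hp.le).integrableOn_of_isBounded hΩ
  have hout : μ.real Ω / 2 ≤ (μ.restrict Ω).real (closedBall c r)ᶜ := by
    rw [measureReal_restrict_apply measurableSet_closedBall.compl, ← sdiff_eq_compl_inter]
    have := measureReal_inter_add_sdiff (μ := μ) (measurableSet_closedBall (x := c) (ε := r)) hΩfin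
    have := measureReal_mono (μ := μ) (inter_subset_right (s := Ω) (t := closedBall c r))
      measure_closedBall_lt_top.ne
    linarith
  calc m ^ p * (μ.real Ω / 2) ≤ m ^ p * (μ.restrict Ω).real (closedBall c r)ᶜ := by gcongr
    _ ≤ ∫ x in Ω, |tent c r h x - M| ^ p ∂μ :=
        mul_measureReal_le_integral_of_le hint (ae_of_all _ fun x => by positivity)
          measurableSet_closedBall.compl (measure_ne_top_of_subset (subset_univ _) (by
            rw [Measure.restrict_apply_univ]; exact hΩfin)) fun x hx => by
          rw [tent_eq_zero_of_notMem_closedBall c hr hx, zero_sub, abs_neg,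
            abs_of_nonneg (hm.trans hmM)]
          exact rpow_le_rpow hm hmM hp.le

theorem exists_lipschitz_away_from_rpow_average_with_small_gradient (hlam : 0 < lam) (hp : 0 < p)
    (hpd : p * (1 + d * lam) < d) {Ω S : Set E} (hΩ : Bornology.IsBounded Ω) (hSΩ : S ⊆ Ω)
    (hS : μ S ≠ 0) :
    ∃ m > 0, ∀ ε > 0, ∃ w : E → ℝ, (∃ K, LipschitzWith K w) ∧ (∀ x, 0 ≤ w x) ∧
      m ≤ (∫ x in Ω, |w x - (⨍ y in S, w y ^ (1 / lam) ∂μ) ^ lam| ^ p ∂μ) ^ (1 / p) ∧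
      (∫ x in Ω, ‖fderiv ℝ w x‖ ^ p ∂μ) ^ (1 / p) ≤ ε := by
  have hd : 0 < d := by exact_mod_cast (by positivity : 0 < p * (1 + d * lam)).trans hpd
  have hκ : 0 < μ.real (ball (0 : E) 1) :=
    ENNReal.toReal_pos (measure_ball_pos μ 0 one_pos).ne' measure_ball_lt_top.ne
  have hS' : 0 < μ.real S :=
    ENNReal.toReal_pos hS (measure_ne_top_of_subset hSΩ hΩ.measure_lt_top.ne)
  have hΩ' : 0 < μ.real Ω := hS'.trans_le (measureReal_mono hSΩ hΩ.measure_lt_top.ne)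
  obtain ⟨c, hc⟩ := exists_eventually_half_measureReal_closedBall_le μ hS
  set m₀ := (μ.real (ball (0 : E) 1) / (2 ^ (1 / lam) * 2 ^ d * 2 * μ.real S)) ^ lam
  have hm₀ : 0 < m₀ := by positivity
  refine ⟨(m₀ ^ p * (μ.real Ω / 2)) ^ (1 / p), by positivity, fun ε hε => ?_⟩
  have hvol : Tendsto (fun r => μ.real (closedBall c r)) (𝓝[>] 0) (𝓝 0) := by
    refine Tendsto.congr' (eventually_nhdsWithin_of_forall fun r (hr : 0 < r) =>
      (Measure.addHaar_real_closedBall μ c hr.le).symm) ?_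
    simpa using (((continuous_pow d).tendsto' 0 0 (zero_pow hd.ne')).mul_const
      (μ.real (ball (0 : E) 1))).mono_left nhdsWithin_le_nhds
  have hdecay : Tendsto (fun r => μ.real (ball (0 : E) 1) * r ^ ((d : ℝ) - p * (1 + d * lam)))
      (𝓝[>] 0) (𝓝 0) := by
    simpa using (((continuous_rpow_const (sub_pos.2 hpd).le).tendsto' 0 0
      (zero_rpow (sub_pos.2 hpd).ne')).const_mul (μ.real (ball (0 : E) 1))).mono_left
        nhdsWithin_le_nhds
  obtain ⟨r, hdens, hsmall, hgrad, hr⟩ :=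
    ((eventually_nhdsGT_zero_mul_left (inv_pos.2 two_pos) hc).and
      ((hvol.eventually (gt_mem_nhds (half_pos hΩ'))).and
        ((hdecay.eventually (gt_mem_nhds (rpow_pos_of_pos hε p))).and self_mem_nhdsWithin))).exists
  have hh : 0 ≤ r ^ (-(lam * d)) := rpow_nonneg hr.le _
  refine ⟨tent c r (r ^ (-(lam * d))), ⟨_, lipschitzWith_tent c hr hh⟩, tent_nonneg c hh, ?_, ?_⟩
  · have havg := div_le_average_rpow_tent μ c hr hlam (hΩ.subset hSΩ)
      (by simpa only [div_eq_inv_mul] using hdens)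
    gcongr
    exact mul_half_measureReal_le_setIntegral_rpow_abs_tent_sub μ c hΩ hr hh hp hm₀.le
      (rpow_le_rpow (by positivity) havg hlam.le) hsmall.le
  · calc _ ≤ (ε ^ p) ^ (1 / p) := by
          gcongr
          exact (setIntegral_rpow_norm_fderiv_tent_le μ c hr hp Ω).trans hgrad.le
      _ = ε := by rw [← rpow_mul hε.le, mul_one_div_cancel hp.ne', rpow_one]

end AddHaar

theorem nonlinear_poincare_fails_small_p_general
    (n : ℕ) (lam p : ℝ)
    (hlam0 : 0 < lam)
    (hp0 : 0 < p) (hp1 : p < (n : ℝ) / (1 + n * lam))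
    (Ω : Set (EuclideanSpace ℝ (Fin n)))
    (hΩb : Bornology.IsBounded Ω)
    (S : Set (EuclideanSpace ℝ (Fin n))) (hSΩ : S ⊆ Ω)
    (hSpos : 0 < volume S) :
    ¬ ∃ C : ℝ, ∀ w : EuclideanSpace ℝ (Fin n) → ℝ,
      (∃ K : NNReal, LipschitzWith K w) → (∀ x ∈ Ω, 0 ≤ w x) →
      (∫ x in Ω, |w x - (⨍ y in S, w y ^ (1 / lam)) ^ lam| ^ p) ^ (1 / p) ≤
        C * (∫ x in Ω, ‖fderiv ℝ w x‖ ^ p) ^ (1 / p) := by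
  rintro ⟨C, hC⟩
  obtain ⟨m, hm, hw⟩ := exists_lipschitz_away_from_rpow_average_with_small_gradient volume hlam0
    hp0 (by rwa [finrank_euclideanSpace_fin, ← lt_div_iff₀ (by positivity)]) hΩb hSΩ hSpos.ne'
  obtain ⟨w, hwlip, hw0, hwm, hwε⟩ := hw (m / (|C| + 1)) (by positivity)
  have hgap : |C| * (m / (|C| + 1)) < m := by
    rw [mul_div_assoc', div_lt_iff₀ (by positivity)]
    nlinarith [abs_nonneg C]
  have := calc
    m ≤ C * (∫ x in Ω, ‖fderiv ℝ w x‖ ^ p) ^ (1 / p) := hwm.trans (hC w hwlip fun x _ => hw0 x)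
    _ ≤ |C| * (∫ x in Ω, ‖fderiv ℝ w x‖ ^ p) ^ (1 / p) := by gcongr; exact le_abs_self C
    _ ≤ |C| * (m / (|C| + 1)) := by gcongr
  linarith

/-- Failure of the nonlinear Poincaré inequality for `0 < λ < 1` and
`0 < p < n/(1+nλ)`: no constant `C` works for all nonnegative Lipschitz
functions. -/
theorem nonlinear_poincare_fails_small_p
    (n : ℕ) (hn : 1 ≤ n) (lam p : ℝ)
    (hlam0 : 0 < lam) (hlam1 : lam < 1)
    (hp0 : 0 < p) (hp1 : p < (n : ℝ) / (1 + n * lam))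
    (Ω : Set (EuclideanSpace ℝ (Fin n)))
    (hΩo : IsOpen Ω) (hΩb : Bornology.IsBounded Ω)
    (S : Set (EuclideanSpace ℝ (Fin n))) (hSΩ : S ⊆ Ω)
    (hSm : MeasurableSet S) (hSpos : 0 < volume S) :
    ¬ ∃ C : ℝ, ∀ w : EuclideanSpace ℝ (Fin n) → ℝ,
      (∃ K : NNReal, LipschitzWith K w) → (∀ x ∈ Ω, 0 ≤ w x) →
      (∫ x in Ω, |w x - (⨍ y in S, w y ^ (1 / lam)) ^ lam| ^ p) ^ (1 / p) ≤
        C * (∫ x in Ω, ‖fderiv ℝ w x‖ ^ p) ^ (1 / p) :=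
  nonlinear_poincare_fails_small_p_general n lam p hlam0 hp0 hp1 Ω hΩb S hSΩ hSpos

end
end

section
/- Let n ≥ 1, 0 < λ < ∞ and 0 < p < 1, and let Ω = S = [−1,1]^n. Then there exists NO constant C such that ‖ w − ( (1/|S|) ∫_S w^{1/λ} )^{λ} ‖_{L^p(Ω)} ≤ C ‖∇w‖_{L^p(Ω)} holds for all nonnegative functions w ∈ W^{1,p}(Ω). In fact, for each small α > 0, the function w(x) := (2 + f(x_1))^{λ}, where f(x_1) = |x_1|^{α} for x_1 < 0 and f(x_1) = −|x_1|^{α} for x_1 ≥ 0, satisfies ‖∇w‖_{L^p(Ω)}^p ≤ C α^p → 0 while ‖ w − ((1/|Ω|)∫_Ω w^{1/λ})^{λ} ‖_{L^p(Ω)}^p ≥ 1/C for a constant C depending only on λ and p. -/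
/-!
For `w_α = (2 + f_α(x₁))^λ` the function `w_α^{1/λ} = 2 + f_α(x₁)` has mean `2` because `f_α` is
odd, so `|w_α - 2^λ| ≥ (5/2)^λ - 2^λ` on the slab `x₁ ≤ -1/2`, uniformly in `α`. On the other hand
`|∇w_α| ≲ α |x₁|^(α-1)`, whose `p`-th power is at most `α^p |x₁|^(-p)`, integrable because `p < 1`.
So `‖∇w_α‖_p → 0` as `α → 0` while the left-hand side stays bounded below.
-/

open MeasureTheory Real Set

noncomputable section

/-- The cube `[-1,1]^n`. -/
def cube (n : ℕ) : Set (EuclideanSpace ℝ (Fin n)) :=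
  {x | ∀ i, x i ∈ Set.Icc (-1 : ℝ) 1}

/-- The function `w(x) = (2 + f(x_1))^λ` where `f(t) = |t|^α` for `t < 0` and
`f(t) = -|t|^α` for `t ≥ 0`; here the first coordinate is `x i`. -/
def wfun (n : ℕ) (lam α : ℝ) (i : Fin n) (x : EuclideanSpace ℝ (Fin n)) : ℝ :=
  (2 + (if x i < 0 then |x i| ^ α else -(|x i| ^ α))) ^ lam

open scoped ENNReal Topology
open Filter

section Cube

variable {n : ℕ}

lemma cube_eq_preimage_ofLp (n : ℕ) :
    cube n = WithLp.ofLp ⁻¹' Set.univ.pi fun _ : Fin n => Icc (-1 : ℝ) 1 := by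
  ext x; simp [cube, -Set.pi_univ_Icc]

lemma measurableSet_cube (n : ℕ) : MeasurableSet (cube n) := by
  rw [cube_eq_preimage_ofLp]
  exact (PiLp.volume_preserving_ofLp _).measurable (.univ_pi fun _ => measurableSet_Icc)

lemma abs_apply_le_one_of_mem_cube {x : EuclideanSpace ℝ (Fin n)} (hx : x ∈ cube n)
    (i : Fin n) : |x i| ≤ 1 :=
  abs_le.2 (hx i)

lemma volume_real_cube (n : ℕ) : volume.real (cube n) = 2 ^ n := by
  rw [measureReal_def, cube_eq_preimage_ofLp, (PiLp.volume_preserving_ofLp _).measure_preimage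
    (MeasurableSet.univ_pi fun _ => measurableSet_Icc).nullMeasurableSet, volume_pi_pi]
  simp [Real.volume_Icc]
  norm_num

lemma volume_restrict_cube_map_apply (i : Fin n) :
    (volume.restrict (cube n)).map (fun x => x i) =
      (2 ^ (n - 1) : ℝ≥0∞) • volume.restrict (Icc (-1 : ℝ) 1) := by
  classical
  have hpi : (volume.restrict (cube n)).map WithLp.ofLp =
      Measure.pi fun _ : Fin n => volume.restrict (Icc (-1 : ℝ) 1) := by
    rw [cube_eq_preimage_ofLp, ← Measure.restrict_map (PiLp.volume_preserving_ofLp _).measurable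
      (MeasurableSet.univ_pi fun _ => measurableSet_Icc), (PiLp.volume_preserving_ofLp _).map_eq,
      volume_pi, Measure.restrict_pi_pi]
  have hcoord : (fun x : EuclideanSpace ℝ (Fin n) => x i) = Function.eval i ∘ WithLp.ofLp := rfl
  rw [hcoord, ← Measure.map_map (measurable_pi_apply i) (PiLp.volume_preserving_ofLp _).measurable,
    hpi, Measure.pi_map_eval]
  simp [Real.volume_Icc, Finset.card_erase_of_mem]
  norm_num

lemma ae_cube_comp_apply (i : Fin n) {P : ℝ → Prop} (hP : ∀ᵐ t, P t) :
    ∀ᵐ x ∂volume.restrict (cube n), P (x i) := by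
  refine ae_of_ae_map (by fun_prop) ?_
  rw [volume_restrict_cube_map_apply]
  exact Measure.ae_smul_measure (ae_restrict_of_ae hP) _

lemma integral_cube_comp_apply (i : Fin n) {G : ℝ → ℝ} (hG : Measurable G) :
    ∫ x in cube n, G (x i) = 2 ^ (n - 1) * ∫ t in Icc (-1 : ℝ) 1, G t := by
  rw [← integral_map (by fun_prop) hG.aestronglyMeasurable,
    volume_restrict_cube_map_apply, integral_smul_measure]
  simp

lemma integrableOn_cube_comp_apply (i : Fin n) {G : ℝ → ℝ}
    (hGi : IntegrableOn G (Icc (-1 : ℝ) 1)) :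
    IntegrableOn (fun x => G (x i)) (cube n) := by
  refine Integrable.comp_aemeasurable (g := G) ?_ (by fun_prop)
  rw [volume_restrict_cube_map_apply]
  exact hGi.smul_measure (by simp)

lemma setAverage_cube_comp_apply (i : Fin n) {G : ℝ → ℝ} (hG : Measurable G) :
    ⨍ x in cube n, G (x i) = ⨍ t in Icc (-1 : ℝ) 1, G t := by
  obtain ⟨m, rfl⟩ : ∃ m, n = m + 1 := ⟨n - 1, by have := i.pos; omega⟩
  rw [setAverage_eq, setAverage_eq, integral_cube_comp_apply i hG, volume_real_cube,
    Real.volume_real_Icc, smul_eq_mul, smul_eq_mul]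
  norm_num [pow_succ]
  field_simp

end Cube

/-- The profile `f` of the paper. -/
def cusp (α t : ℝ) : ℝ := if t < 0 then |t| ^ α else -(|t| ^ α)

section Cusp

variable {α : ℝ}

lemma wfun_eq (n : ℕ) (lam α : ℝ) (i : Fin n) (x : EuclideanSpace ℝ (Fin n)) :
    wfun n lam α i x = (2 + cusp α (x i)) ^ lam := rfl

lemma abs_cusp (α t : ℝ) : |cusp α t| = |t| ^ α := by
  unfold cusp
  split_ifs <;> simp [abs_of_nonneg (rpow_nonneg (abs_nonneg t) α)]

lemma cusp_neg (hα : α ≠ 0) (t : ℝ) : cusp α (-t) = -cusp α t := by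
  unfold cusp
  rcases lt_trichotomy t 0 with h | rfl | h
  · simp [h.not_gt, h]
  · simp [zero_rpow hα]
  · simp [h, h.not_gt]

lemma continuous_cusp (hα : 0 < α) : Continuous (cusp α) := by
  have h := (continuous_abs.rpow_const fun _ => Or.inr hα.le)
  refine (h.neg.if_le h (continuous_const (y := (0 : ℝ))) continuous_id fun t ht => ?_).congr
    fun t => ?_
  · simp [← show 0 = t from ht, zero_rpow hα.ne']
  · simp only [cusp, ← not_le, ite_not, id, Pi.neg_apply]

lemma measurable_cusp (hα : 0 < α) : Measurable (cusp α) := (continuous_cusp hα).measurable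

lemma one_le_two_add_cusp (hα : 0 < α) {t : ℝ} (ht : |t| ≤ 1) : 1 ≤ 2 + cusp α t := by
  have := neg_le_of_abs_le ((abs_cusp α t).trans_le (rpow_le_one (abs_nonneg t) ht hα.le))
  linarith

lemma two_add_cusp_le_three (hα : 0 < α) {t : ℝ} (ht : |t| ≤ 1) : 2 + cusp α t ≤ 3 := by
  have := le_of_abs_le ((abs_cusp α t).trans_le (rpow_le_one (abs_nonneg t) ht hα.le))
  linarith

lemma hasDerivAt_cusp {t : ℝ} (ht : t ≠ 0) :
    HasDerivAt (cusp α) (-(α * |t| ^ (α - 1))) t := by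
  rcases ht.lt_or_gt with ht | ht
  · have h : cusp α =ᶠ[𝓝 t] fun s => (-s) ^ α := by
      filter_upwards [Iio_mem_nhds ht] with s hs
      simp [cusp, show s < 0 from hs, abs_of_neg (show s < 0 from hs)]
    have := ((hasDerivAt_id t).neg.rpow_const (p := α) (Or.inl (neg_ne_zero.2 ht.ne)))
    rw [abs_of_neg ht]
    exact (this.congr_of_eventuallyEq h).congr_deriv (by simp)
  · have h : cusp α =ᶠ[𝓝 t] fun s => -s ^ α := by
      filter_upwards [Ioi_mem_nhds ht] with s hs
      simp [cusp, (show 0 < s from hs).not_gt, abs_of_pos (show 0 < s from hs)]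
    rw [abs_of_pos ht]
    exact ((hasDerivAt_rpow_const (Or.inl ht.ne')).neg).congr_of_eventuallyEq h

lemma integral_cusp (hα : 0 < α) : ∫ t in Icc (-1 : ℝ) 1, cusp α t = 0 := by
  rw [integral_Icc_eq_integral_Ioc, ← intervalIntegral.integral_of_le (by norm_num)]
  have h := intervalIntegral.integral_comp_neg (a := -1) (b := 1) (cusp α)
  simp only [cusp_neg hα.ne', intervalIntegral.integral_neg, neg_neg] at h
  linarith

end Cusp

lemma norm_fderiv_comp_apply_le {ι : Type*} [Fintype ι] {g : ℝ → ℝ} {x : EuclideanSpace ℝ ι}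
    {i : ι} (hg : DifferentiableAt ℝ g (x i)) :
    ‖fderiv ℝ (fun y : EuclideanSpace ℝ ι => g (y i)) x‖ ≤ |deriv g (x i)| := by
  have hproj : ‖EuclideanSpace.proj (𝕜 := ℝ) (ι := ι) i‖ ≤ 1 :=
    ContinuousLinearMap.opNorm_le_bound _ zero_le_one fun y => by
      simpa using PiLp.norm_apply_le y i
  have hfd : HasFDerivAt (fun y : EuclideanSpace ℝ ι => g (y i))
      (deriv g (x i) • EuclideanSpace.proj i) x :=
    hg.hasDerivAt.comp_hasFDerivAt x (EuclideanSpace.proj (𝕜 := ℝ) i).hasFDerivAt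
  rw [hfd.fderiv, norm_smul, Real.norm_eq_abs]
  exact mul_le_of_le_one_right (abs_nonneg _) hproj

section Wfun

variable {n : ℕ} {lam α : ℝ}

lemma continuous_wfun (hlam : 0 ≤ lam) (hα : 0 < α) (i : Fin n) :
    Continuous (wfun n lam α i) :=
  ((continuous_const.add (continuous_cusp hα)).rpow_const fun _ => Or.inr hlam).comp
    (by fun_prop)

lemma wfun_nonneg (hα : 0 < α) (i : Fin n) {x : EuclideanSpace ℝ (Fin n)} (hx : x ∈ cube n) :
    0 ≤ wfun n lam α i x :=
  rpow_nonneg (zero_le_one.trans (one_le_two_add_cusp hα (abs_apply_le_one_of_mem_cube hx i))) _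

lemma hasDerivAt_two_add_cusp_rpow {t : ℝ} (ht : t ≠ 0) (hb : 2 + cusp α t ≠ 0) :
    HasDerivAt (fun s => (2 + cusp α s) ^ lam)
      (-(α * |t| ^ (α - 1)) * lam * (2 + cusp α t) ^ (lam - 1)) t :=
  ((hasDerivAt_cusp ht).const_add 2).rpow_const (Or.inl hb)

lemma norm_fderiv_wfun_le (hlam : 0 < lam) (hα : 0 < α) {i : Fin n}
    {x : EuclideanSpace ℝ (Fin n)} (hx : x ∈ cube n) (hx0 : x i ≠ 0) :
    ‖fderiv ℝ (wfun n lam α i) x‖ ≤ lam * 3 ^ lam * α * |x i| ^ (α - 1) := by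
  have h1 := one_le_two_add_cusp hα (abs_apply_le_one_of_mem_cube hx i)
  have h3 := two_add_cusp_le_three hα (abs_apply_le_one_of_mem_cube hx i)
  have hd := hasDerivAt_two_add_cusp_rpow (lam := lam) hx0 (by linarith)
  have hpow : (2 + cusp α (x i)) ^ (lam - 1) ≤ 3 ^ lam :=
    (rpow_le_rpow_of_exponent_le h1 (by linarith)).trans (rpow_le_rpow (by linarith) h3 hlam.le)
  calc ‖fderiv ℝ (wfun n lam α i) x‖ ≤ |deriv (fun s => (2 + cusp α s) ^ lam) (x i)| :=
        norm_fderiv_comp_apply_le hd.differentiableAt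
    _ = lam * α * |x i| ^ (α - 1) * (2 + cusp α (x i)) ^ (lam - 1) := by
        rw [hd.deriv, neg_mul, neg_mul, abs_neg, abs_of_nonneg (by positivity)]
        ring
    _ ≤ lam * α * |x i| ^ (α - 1) * 3 ^ lam := by gcongr
    _ = lam * 3 ^ lam * α * |x i| ^ (α - 1) := by ring

end Wfun

lemma intervalIntegrable_abs_rpow {r : ℝ} (hr : -1 < r) (a b : ℝ) :
    IntervalIntegrable (fun t : ℝ => |t| ^ r) volume a b := by
  refine intervalIntegrable_of_even (fun t => by rw [abs_neg]) fun a ha => ?_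
  refine (intervalIntegral.intervalIntegrable_rpow' hr).congr_ae ?_
  filter_upwards [ae_restrict_mem measurableSet_uIoc] with t ht
  rw [uIoc_of_le ha.le] at ht
  rw [abs_of_pos ht.1]

section Estimates

variable {n : ℕ} {lam α p : ℝ}

lemma integral_norm_fderiv_wfun_rpow_le (hlam : 0 < lam) (hp0 : 0 < p) (hp1 : p < 1)
    (hα : 0 < α) (i : Fin n) :
    ∫ x in cube n, ‖fderiv ℝ (wfun n lam α i) x‖ ^ p ≤
      (lam * 3 ^ lam) ^ p * (∫ x in cube n, |x i| ^ (-p)) * α ^ p := by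
  have hpt : ∀ᵐ x ∂volume.restrict (cube n),
      ‖fderiv ℝ (wfun n lam α i) x‖ ^ p ≤ (lam * 3 ^ lam) ^ p * α ^ p * |x i| ^ (-p) := by
    filter_upwards [ae_restrict_mem (measurableSet_cube n),
      ae_cube_comp_apply i (Measure.ae_ne volume 0)] with x hx hx0
    have hx1 := abs_apply_le_one_of_mem_cube hx i
    calc ‖fderiv ℝ (wfun n lam α i) x‖ ^ p ≤ (lam * 3 ^ lam * α * |x i| ^ (α - 1)) ^ p :=
          rpow_le_rpow (norm_nonneg _) (norm_fderiv_wfun_le hlam hα hx hx0) hp0.le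
      _ = (lam * 3 ^ lam) ^ p * α ^ p * |x i| ^ ((α - 1) * p) := by
          rw [mul_rpow (by positivity) (by positivity), mul_rpow (by positivity) hα.le,
            rpow_mul (abs_nonneg _)]
      _ ≤ (lam * 3 ^ lam) ^ p * α ^ p * |x i| ^ (-p) := by
          refine mul_le_mul_of_nonneg_left ?_ (by positivity)
          exact rpow_le_rpow_of_exponent_ge (abs_pos.2 hx0) hx1 (by nlinarith)
  have hint : IntegrableOn (fun x : EuclideanSpace ℝ (Fin n) => |x i| ^ (-p)) (cube n) :=
    integrableOn_cube_comp_apply i <| (intervalIntegrable_iff_integrableOn_Icc_of_le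
      (by norm_num)).1 (intervalIntegrable_abs_rpow (by linarith) _ _)
  calc ∫ x in cube n, ‖fderiv ℝ (wfun n lam α i) x‖ ^ p
      ≤ ∫ x in cube n, (lam * 3 ^ lam) ^ p * α ^ p * |x i| ^ (-p) :=
        integral_mono_of_nonneg (ae_of_all _ fun _ => by positivity) (hint.const_mul _) hpt
    _ = (lam * 3 ^ lam) ^ p * (∫ x in cube n, |x i| ^ (-p)) * α ^ p := by
        rw [integral_const_mul]; ring

lemma setAverage_wfun_rpow_one_div (hlam : 0 < lam) (hα : 0 < α) (i : Fin n) :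
    ⨍ x in cube n, wfun n lam α i x ^ (1 / lam) = 2 := by
  have hroot : ∀ x ∈ cube n, wfun n lam α i x ^ (1 / lam) = 2 + cusp α (x i) := fun x hx => by
    have := one_le_two_add_cusp hα (abs_apply_le_one_of_mem_cube hx i)
    rw [wfun_eq, ← rpow_mul (by linarith), mul_one_div_cancel hlam.ne', rpow_one]
  rw [setAverage_congr_fun (measurableSet_cube n) (ae_of_all _ hroot),
    setAverage_cube_comp_apply i (G := fun t => 2 + cusp α t)
      (measurable_const.add (measurable_cusp hα)), setAverage_eq,
    integral_add (by exact integrableOn_const (by simp)) (continuous_cusp hα).integrableOn_Icc,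
    integral_cusp hα]
  simp [Real.volume_real_Icc]

lemma le_integral_abs_wfun_sub_two_rpow (hlam : 0 < lam) (hp0 : 0 < p) (hα : 0 < α)
    (hα1 : α < 1) (i : Fin n) :
    ((5 / 2) ^ lam - 2 ^ lam) ^ p / 2 ≤ ∫ x in cube n, |wfun n lam α i x - 2 ^ lam| ^ p := by
  set H : ℝ → ℝ := fun t => |(2 + cusp α t) ^ lam - 2 ^ lam| ^ p
  have hH : Continuous H :=
    (((continuous_const.add (continuous_cusp hα)).rpow_const fun _ => Or.inr hlam.le).sub
      continuous_const).abs.rpow_const fun _ => Or.inr hp0.le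
  -- on `[-1, -1/2]` one has `cusp α t = |t| ^ α ≥ |t| ≥ 1/2`
  have hlow : ∀ t ∈ Icc (-1 : ℝ) (-1 / 2), ((5 / 2) ^ lam - 2 ^ lam) ^ p ≤ H t := by
    intro t ⟨ht1, ht2⟩
    have hcusp : 1 / 2 ≤ cusp α t := by
      have hneg : t < 0 := by linarith
      simp only [cusp, hneg, if_true, abs_of_neg hneg]
      linarith [self_le_rpow_of_le_one (x := -t) (by linarith) (by linarith) hα1.le]
    have h52 : (5 / 2) ^ lam ≤ (2 + cusp α t) ^ lam :=
      rpow_le_rpow (by norm_num) (by linarith) hlam.le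
    have h2 : (2 : ℝ) ^ lam < (5 / 2) ^ lam := rpow_lt_rpow (by norm_num) (by norm_num) hlam
    exact rpow_le_rpow (by linarith) ((le_abs_self _).trans' (by linarith)) hp0.le
  calc ((5 / 2) ^ lam - 2 ^ lam) ^ p / 2 ≤ ∫ t in Icc (-1 : ℝ) (-1 / 2), H t := by
        have := setIntegral_ge_of_const_le_real (μ := volume) measurableSet_Icc (by simp) hlow
          hH.integrableOn_Icc
        rw [Real.volume_real_Icc] at this
        norm_num at this ⊢
        linarith
    _ ≤ ∫ t in Icc (-1 : ℝ) 1, H t :=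
        setIntegral_mono_set hH.integrableOn_Icc (ae_of_all _ fun _ => by positivity)
          (Icc_subset_Icc le_rfl (by norm_num)).eventuallyLE
    _ ≤ 2 ^ (n - 1) * ∫ t in Icc (-1 : ℝ) 1, H t :=
        le_mul_of_one_le_left (setIntegral_nonneg measurableSet_Icc fun _ _ => by positivity)
          (one_le_pow₀ (by norm_num))
    _ = ∫ x in cube n, |wfun n lam α i x - 2 ^ lam| ^ p :=
        (integral_cube_comp_apply i hH.measurable).symm

lemma exists_wfun_gradient_le_and_deviation_ge (hlam : 0 < lam) (hp0 : 0 < p) (hp1 : p < 1)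
    (i : Fin n) :
    ∃ C : ℝ, 0 < C ∧ ∀ α : ℝ, 0 < α → α < 1 →
      (∫ x in cube n, ‖fderiv ℝ (wfun n lam α i) x‖ ^ p) ≤ C * α ^ p ∧
      1 / C ≤ ∫ x in cube n,
        |wfun n lam α i x - (⨍ y in cube n, wfun n lam α i y ^ (1 / lam)) ^ lam| ^ p := by
  set K := (lam * 3 ^ lam) ^ p * ∫ x in cube n, |x i| ^ (-p)
  set L : ℝ := ((5 / 2) ^ lam - 2 ^ lam) ^ p / 2
  have hK : 0 ≤ K :=
    mul_nonneg (by positivity) (setIntegral_nonneg (measurableSet_cube n) fun _ _ => by positivity)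
  have hL : 0 < L := by
    have : (2 : ℝ) ^ lam < (5 / 2) ^ lam := rpow_lt_rpow (by norm_num) (by norm_num) hlam
    have : 0 < ((5 / 2 : ℝ) ^ lam - 2 ^ lam) ^ p := rpow_pos_of_pos (by linarith) p
    positivity
  refine ⟨K + L⁻¹, by positivity, fun α hα hα1 => ⟨?_, ?_⟩⟩
  · refine (integral_norm_fderiv_wfun_rpow_le hlam hp0 hp1 hα i).trans ?_
    gcongr
    linarith [inv_pos.2 hL]
  · rw [setAverage_wfun_rpow_one_div hlam hα i]
    refine le_trans ?_ (le_integral_abs_wfun_sub_two_rpow hlam hp0 hα hα1 i)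
    exact (one_div_le_one_div_of_le (inv_pos.2 hL) (by linarith)).trans_eq
      (by rw [one_div, inv_inv])

end Estimates

lemma not_forall_rpow_le_mul_rpow {p C C₀ : ℝ} (hp : 0 < p) (hC : 0 < C) {A B : ℝ → ℝ}
    (hB0 : ∀ α, 0 ≤ B α) (hB : ∀ α, 0 < α → α < 1 → B α ≤ C * α ^ p)
    (hA : ∀ α, 0 < α → α < 1 → 1 / C ≤ A α) :
    ¬ ∀ α, 0 < α → α < 1 → A α ^ (1 / p) ≤ C₀ * B α ^ (1 / p) := by
  intro h
  have hsmall : ∀ᶠ α in 𝓝[>] (0 : ℝ), 0 < α ∧ α < 1 :=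
    inter_mem_nhdsWithin _ (Iio_mem_nhds one_pos)
  have hB_le : ∀ α, 0 < α → α < 1 → B α ^ (1 / p) ≤ C ^ (1 / p) * α := fun α hα hα1 => by
    calc B α ^ (1 / p) ≤ (C * α ^ p) ^ (1 / p) :=
          rpow_le_rpow (hB0 α) (hB α hα hα1) (by positivity)
      _ = C ^ (1 / p) * α := by
        rw [mul_rpow hC.le (by positivity), ← rpow_mul hα.le, mul_one_div_cancel hp.ne', rpow_one]
  have hB_lim : Tendsto (fun α => B α ^ (1 / p)) (𝓝[>] 0) (𝓝 0) := by
    have hlin : Tendsto (fun α : ℝ => C ^ (1 / p) * α) (𝓝[>] 0) (𝓝 0) :=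
      tendsto_nhdsWithin_of_tendsto_nhds ((continuous_const_mul _).tendsto' 0 0 (by simp))
    exact tendsto_of_tendsto_of_tendsto_of_le_of_le' tendsto_const_nhds hlin
      (Eventually.of_forall fun α => rpow_nonneg (hB0 α) _)
      (hsmall.mono fun α hα => hB_le α hα.1 hα.2)
  have : (1 / C) ^ (1 / p) ≤ 0 := by
    refine ge_of_tendsto (by simpa only [mul_zero] using hB_lim.const_mul C₀)
      (hsmall.mono fun α hα => ?_)
    exact (rpow_le_rpow (by positivity) (hA α hα.1 hα.2) (by positivity)).trans (h α hα.1 hα.2)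
  exact this.not_gt (by positivity)

/-- Failure of the nonlinear Poincaré inequality for `0 < p < 1` on
`Ω = S = [-1,1]^n`, witnessed by the explicit family `wfun`. -/
theorem nonlinear_poincare_fails_p_lt_one
    (n : ℕ) (hn : 1 ≤ n) (lam p : ℝ)
    (hlam : 0 < lam) (hp0 : 0 < p) (hp1 : p < 1) :
    (¬ ∃ C : ℝ, ∀ w : EuclideanSpace ℝ (Fin n) → ℝ,
      Continuous w → (∀ x ∈ cube n, 0 ≤ w x) →
      (∫ x in cube n, |w x - (⨍ y in cube n, w y ^ (1 / lam)) ^ lam| ^ p) ^ (1 / p) ≤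
        C * (∫ x in cube n, ‖fderiv ℝ w x‖ ^ p) ^ (1 / p)) ∧
    ∃ C : ℝ, 0 < C ∧ ∀ α : ℝ, 0 < α → α < 1 →
      (∫ x in cube n, ‖fderiv ℝ (wfun n lam α ⟨0, by omega⟩) x‖ ^ p) ≤ C * α ^ p ∧
      1 / C ≤ ∫ x in cube n,
        |wfun n lam α ⟨0, by omega⟩ x -
          (⨍ y in cube n, wfun n lam α ⟨0, by omega⟩ y ^ (1 / lam)) ^ lam| ^ p := by
  obtain ⟨C, hC, hfamily⟩ :=
    exists_wfun_gradient_le_and_deviation_ge hlam hp0 hp1 (⟨0, by omega⟩ : Fin n)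
  refine ⟨fun ⟨C₀, hC₀⟩ => ?_, C, hC, hfamily⟩
  exact not_forall_rpow_le_mul_rpow hp0 hC (fun _ => by positivity)
    (fun α hα hα1 => (hfamily α hα hα1).1) (fun α hα hα1 => (hfamily α hα hα1).2)
    fun α hα _ => hC₀ _ (continuous_wfun hlam.le hα _) fun _ => wfun_nonneg hα _

end
end

section
/- For every α > −1/2 there exists a constant C, depending only on α, such that ‖ |x_1|^{α} u ‖_{L^2([0,1]^2)}^2 ≤ C ‖ |x_1|^{α} ∂_{x_1} u ‖_{L^1([0,1]^2)} · ‖ |x_1|^{α} ∂_{x_2} u ‖_{L^1([0,1]^2)} for all u ∈ C^1([0,1]^2) satisfying u(1, x_2) = 0 and u(x_1, 1) = 0 for all 0 ≤ x_1, x_2 ≤ 1. -/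
/-!
Fix `(x, y)` in the square and put `a = |u(x, y)|`, `b = |u(min(2x, 1), y)|`. Integrating `∂₁u`
along the row from `x` to `min(2x, 1)` gives `a ≤ b + A`; integrating `∂₂u` along the column from
`y` to `1`, where `u` vanishes, gives `a ≤ R`. Hence `a² ≤ ab + RA`, and Young's inequality with
`λ = 2^(-(α + 1/2))` turns `ab` into `λ/2 · a² + b²/(2λ)`.

On `[x, 2x]` the weight `|t|^α` changes by a factor at most `2^|α|`, so `|x|^α A` is bounded by
`2^|α|` times the weighted `L¹` norm of `∂₁u` on the row through `y`, and `|x|^α R` by the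
weighted `L¹` norm of `∂₂u` on the column through `x`; the product of these two functions, one of
`y` and one of `x`, integrates to the right-hand side. The dilation `x ↦ 2x` (using `u(1, ·) = 0`)
shows that the weighted `L²` norm of `b` is `2^(-(2α + 1)) = λ²` times that of `a`. So the
left-hand side `I` satisfies `I ≤ λ I + 2^|α| N₁ N₂`, where `N₁`, `N₂` are the two weighted `L¹`
norms, and `λ < 1` exactly when `α > -1/2`.
-/

open MeasureTheory Real Set

noncomputable section

local notation "□" => Icc ((0 : ℝ), (0 : ℝ)) (1, 1)

lemma sq_le_of_le_add_of_le {a b A R l : ℝ} (hl : 0 < l) (ha : 0 ≤ a) (hA : 0 ≤ A)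
    (hab : a ≤ b + A) (haR : a ≤ R) :
    a ^ 2 ≤ l / 2 * a ^ 2 + 1 / (2 * l) * b ^ 2 + R * A := by
  have young : a * b ≤ l / 2 * a ^ 2 + 1 / (2 * l) * b ^ 2 := by
    have hgap : l / 2 * a ^ 2 + 1 / (2 * l) * b ^ 2 - a * b = (l * a - b) ^ 2 / (2 * l) := by
      field_simp
      ring
    linarith [div_nonneg (sq_nonneg (l * a - b)) (by positivity : (0 : ℝ) ≤ 2 * l)]
  nlinarith [mul_le_mul_of_nonneg_left hab ha, mul_le_mul_of_nonneg_right haR hA]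

lemma rpow_le_two_rpow_abs_mul_rpow {α x t : ℝ} (hx : 0 ≤ x) (hxt : x ≤ t)
    (ht : t ≤ 2 * x) :
    x ^ α ≤ 2 ^ |α| * t ^ α := by
  rcases le_or_gt 0 α with hα | hα
  · calc x ^ α ≤ 1 * t ^ α := by rw [one_mul]; exact rpow_le_rpow hx hxt hα
      _ ≤ 2 ^ |α| * t ^ α := mul_le_mul_of_nonneg_right
          (one_le_rpow one_le_two (abs_nonneg α)) (rpow_nonneg (hx.trans hxt) α)
  rcases hx.eq_or_lt with rfl | hx
  · rw [zero_rpow hα.ne]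
    positivity
  calc x ^ α ≤ (t / 2) ^ α := rpow_le_rpow_of_nonpos (by linarith) (by linarith) hα.le
    _ = 2 ^ |α| * t ^ α := by
      rw [div_rpow (by linarith) zero_le_two, abs_of_neg hα, rpow_neg zero_le_two]
      ring

lemma abs_rpow_mul_abs_sq (x v α : ℝ) : (|x| ^ α * |v|) ^ 2 = |x| ^ (2 * α) * v ^ 2 := by
  rw [mul_pow, sq_abs, ← rpow_natCast, ← rpow_mul (abs_nonneg x), Nat.cast_ofNat, mul_comm α]

lemma abs_le_abs_add_integral_abs_deriv {f f' : ℝ → ℝ} {a b : ℝ} (hab : a ≤ b)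
    (hf : ∀ t ∈ uIcc a b, HasDerivAt f (f' t) t) (hf' : IntervalIntegrable f' volume a b) :
    |f a| ≤ |f b| + ∫ t in a..b, |f' t| := by
  have := intervalIntegral.abs_integral_le_integral_abs (f := f') (μ := volume) hab
  rw [intervalIntegral.integral_eq_sub_of_hasDerivAt hf hf'] at this
  linarith [abs_sub_abs_le_abs_sub (f a) (f b), abs_sub_comm (f b) (f a)]

lemma DifferentiableAt.hasDerivAt_partial_fst {u : ℝ × ℝ → ℝ} {x y : ℝ}
    (hu : DifferentiableAt ℝ u (x, y)) :
    HasDerivAt (fun t => u (t, y)) (fderiv ℝ u (x, y) (1, 0)) x :=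
  hu.hasFDerivAt.comp_hasDerivAt x ((hasDerivAt_id x).prodMk (hasDerivAt_const x y))

lemma DifferentiableAt.hasDerivAt_partial_snd {u : ℝ × ℝ → ℝ} {x y : ℝ}
    (hu : DifferentiableAt ℝ u (x, y)) :
    HasDerivAt (fun s => u (x, s)) (fderiv ℝ u (x, y) (0, 1)) y :=
  hu.hasFDerivAt.comp_hasDerivAt y ((hasDerivAt_const y x).prodMk (hasDerivAt_id y))

lemma intervalIntegral_le_setIntegral_Icc {f : ℝ → ℝ} {a b c d : ℝ} (hcd : c ≤ d)
    (hsub : Icc c d ⊆ Icc a b) (hf : IntegrableOn f (Icc a b))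
    (hf0 : ∀ x ∈ Icc a b, 0 ≤ f x) :
    ∫ x in c..d, f x ≤ ∫ x in Icc a b, f x := by
  rw [intervalIntegral.integral_of_le hcd, ← integral_Icc_eq_integral_Ioc]
  exact setIntegral_mono_set hf ((ae_restrict_iff' measurableSet_Icc).2 (ae_of_all _ hf0))
    hsub.eventuallyLE

lemma integrableOn_abs_rpow_Icc {β : ℝ} (hβ : -1 < β) {b : ℝ} (hb : 0 ≤ b) :
    IntegrableOn (fun x : ℝ => |x| ^ β) (Icc 0 b) := by
  refine ((intervalIntegrable_iff_integrableOn_Icc_of_le hb).1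
    (intervalIntegral.intervalIntegrable_rpow' hβ)).congr_fun (fun x hx => ?_) measurableSet_Icc
  simp only [abs_of_nonneg hx.1]

lemma abs_rpow_mul_integral_le_two_rpow_abs_mul {α : ℝ} (hα : -1 < α) {φ : ℝ → ℝ}
    (hφ : Continuous φ) (hφ0 : ∀ t, 0 ≤ φ t) {x : ℝ} (hx : x ∈ Icc (0 : ℝ) 1) :
    |x| ^ α * ∫ t in x..min (2 * x) 1, φ t ≤
      2 ^ |α| * ∫ t in Icc (0 : ℝ) 1, |t| ^ α * φ t := by
  have hxm : x ≤ min (2 * x) 1 := le_min (by linarith [hx.1]) hx.2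
  have hsub : Icc x (min (2 * x) 1) ⊆ Icc 0 1 := Icc_subset_Icc hx.1 (min_le_right _ _)
  have hint : IntegrableOn (fun t => |t| ^ α * φ t) (Icc 0 1) :=
    (integrableOn_abs_rpow_Icc hα zero_le_one).mul_continuousOn hφ.continuousOn isCompact_Icc
  calc |x| ^ α * ∫ t in x..min (2 * x) 1, φ t
      = ∫ t in x..min (2 * x) 1, |x| ^ α * φ t := (intervalIntegral.integral_const_mul _ _).symm
    _ ≤ ∫ t in x..min (2 * x) 1, 2 ^ |α| * (|t| ^ α * φ t) := by
        refine intervalIntegral.integral_mono_on hxm ((hφ.intervalIntegrable _ _).const_mul _)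
          (((intervalIntegrable_iff_integrableOn_Icc_of_le hxm).2
            (hint.mono_set hsub)).const_mul _) fun t ht => ?_
        rw [← mul_assoc]
        refine mul_le_mul_of_nonneg_right ?_ (hφ0 t)
        rw [abs_of_nonneg hx.1, abs_of_nonneg (hx.1.trans ht.1)]
        exact rpow_le_two_rpow_abs_mul_rpow hx.1 ht.1 (ht.2.trans (min_le_left _ _))
    _ = 2 ^ |α| * ∫ t in x..min (2 * x) 1, |t| ^ α * φ t :=
        intervalIntegral.integral_const_mul _ _
    _ ≤ 2 ^ |α| * ∫ t in Icc (0 : ℝ) 1, |t| ^ α * φ t := by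
        gcongr
        exact intervalIntegral_le_setIntegral_Icc hxm hsub hint
          fun t _ => mul_nonneg (rpow_nonneg (abs_nonneg t) α) (hφ0 t)

lemma setIntegral_abs_rpow_mul_comp_min_two_mul (β : ℝ) {φ : ℝ → ℝ} (hφ : φ 1 = 0) :
    ∫ x in Icc (0 : ℝ) 1, |x| ^ β * φ (min (2 * x) 1) =
      2 ^ (-(β + 1)) * ∫ x in Icc (0 : ℝ) 1, |x| ^ β * φ x := by
  have hvanish : ∫ x in Icc (0 : ℝ) 1, |x| ^ β * φ (min (2 * x) 1) =
      ∫ x in Icc (0 : ℝ) (1 / 2), |x| ^ β * φ (min (2 * x) 1) := by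
    refine setIntegral_eq_of_subset_of_forall_sdiff_eq_zero measurableSet_Icc
      (Icc_subset_Icc_right (by norm_num)) fun x hx => ?_
    have hx2 : 1 / 2 < x := lt_of_not_ge fun h => hx.2 ⟨hx.1.1, h⟩
    rw [min_eq_right (by linarith), hφ, mul_zero]
  have hscale : ∀ x ∈ Icc (0 : ℝ) (1 / 2),
      |x| ^ β * φ (min (2 * x) 1) = 2 ^ (-β) * (|2 * x| ^ β * φ (2 * x)) := by
    intro x hx
    rw [min_eq_left (by linarith [hx.2]), abs_mul, abs_two, mul_rpow zero_le_two (abs_nonneg x),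
      ← mul_assoc, ← mul_assoc, ← rpow_add two_pos, neg_add_cancel, rpow_zero, one_mul]
  rw [hvanish, setIntegral_congr_fun measurableSet_Icc hscale, integral_const_mul,
    integral_Icc_eq_integral_Ioc, ← intervalIntegral.integral_of_le (by norm_num),
    intervalIntegral.integral_comp_mul_left (fun z => |z| ^ β * φ z) two_ne_zero,
    integral_Icc_eq_integral_Ioc, ← intervalIntegral.integral_of_le zero_le_one, smul_eq_mul,
    neg_add, rpow_add two_pos, rpow_neg_one]
  norm_num [mul_assoc]

lemma volume_restrict_Icc_prodMk (a₁ a₂ b₁ b₂ : ℝ) :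
    volume.restrict (Icc (a₁, a₂) (b₁, b₂)) =
      (volume.restrict (Icc a₁ b₁)).prod (volume.restrict (Icc a₂ b₂)) := by
  rw [Icc_prod_eq, Measure.volume_eq_prod, Measure.prod_restrict]

lemma integrableOn_abs_fst_rpow_mul {β : ℝ} (hβ : -1 < β) {g : ℝ × ℝ → ℝ}
    (hg : ContinuousOn g □) :
    IntegrableOn (fun p => |p.1| ^ β * g p) □ := by
  refine IntegrableOn.mul_continuousOn ?_ hg isCompact_Icc
  rw [IntegrableOn, volume_restrict_Icc_prodMk]
  exact (integrableOn_abs_rpow_Icc hβ zero_le_one).comp_fst _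

lemma setIntegral_unitSquare_comp_min_two_mul {β : ℝ} (hβ : -1 < β) {φ : ℝ × ℝ → ℝ}
    (hφ : Continuous φ) (hφ1 : ∀ t ∈ Icc (0 : ℝ) 1, φ (1, t) = 0) :
    ∫ p in □, |p.1| ^ β * φ (min (2 * p.1) 1, p.2) =
      2 ^ (-(β + 1)) * ∫ p in □, |p.1| ^ β * φ p := by
  have hint := integrableOn_abs_fst_rpow_mul hβ hφ.continuousOn
  have hint' := integrableOn_abs_fst_rpow_mul hβ
    (g := fun p => φ (min (2 * p.1) 1, p.2)) (by fun_prop)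
  rw [IntegrableOn, volume_restrict_Icc_prodMk] at hint hint'
  rw [volume_restrict_Icc_prodMk, integral_prod_symm _ hint', integral_prod_symm _ hint,
    ← integral_const_mul]
  exact setIntegral_congr_fun measurableSet_Icc fun y hy =>
    setIntegral_abs_rpow_mul_comp_min_two_mul β (φ := fun x => φ (x, y)) (hφ1 y hy)

section

variable {u : ℝ × ℝ → ℝ}

lemma abs_le_abs_add_integral_partial_fst (hu : ContDiff ℝ 1 u) (y : ℝ) {a b : ℝ}
    (hab : a ≤ b) :
    |u (a, y)| ≤ |u (b, y)| + ∫ t in a..b, |fderiv ℝ u (t, y) (1, 0)| := by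
  have hcd := hu.continuous_fderiv one_ne_zero
  exact abs_le_abs_add_integral_abs_deriv hab
    (fun t _ => (hu.differentiable one_ne_zero _).hasDerivAt_partial_fst)
    (Continuous.intervalIntegrable (by fun_prop) a b)

lemma abs_le_abs_add_integral_partial_snd (hu : ContDiff ℝ 1 u) (x : ℝ) {a b : ℝ}
    (hab : a ≤ b) :
    |u (x, a)| ≤ |u (x, b)| + ∫ s in a..b, |fderiv ℝ u (x, s) (0, 1)| := by
  have hcd := hu.continuous_fderiv one_ne_zero
  exact abs_le_abs_add_integral_abs_deriv hab
    (fun s _ => (hu.differentiable one_ne_zero _).hasDerivAt_partial_snd)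
    (Continuous.intervalIntegrable (by fun_prop) a b)

lemma weighted_sq_le {α : ℝ} (hα : -1 < α) (hu : ContDiff ℝ 1 u) {l : ℝ} (hl : 0 < l)
    {x y : ℝ} (hx : x ∈ Icc (0 : ℝ) 1) (hy : y ∈ Icc (0 : ℝ) 1) (hx1 : u (x, 1) = 0) :
    |x| ^ (2 * α) * u (x, y) ^ 2 ≤
      l / 2 * (|x| ^ (2 * α) * u (x, y) ^ 2) +
        1 / (2 * l) * (|x| ^ (2 * α) * u (min (2 * x) 1, y) ^ 2) +
        2 ^ |α| * ((∫ s in Icc (0 : ℝ) 1, |x| ^ α * |fderiv ℝ u (x, s) (0, 1)|) *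
          ∫ t in Icc (0 : ℝ) 1, |t| ^ α * |fderiv ℝ u (t, y) (1, 0)|) := by
  have hcd := hu.continuous_fderiv one_ne_zero
  set w := |x| ^ α
  have hw : 0 ≤ w := rpow_nonneg (abs_nonneg x) α
  set A := ∫ t in x..min (2 * x) 1, |fderiv ℝ u (t, y) (1, 0)|
  set R := ∫ s in y..1, |fderiv ℝ u (x, s) (0, 1)|
  have hxm : x ≤ min (2 * x) 1 := le_min (by linarith [hx.1]) hx.2
  have hA : 0 ≤ A := intervalIntegral.integral_nonneg hxm fun _ _ => abs_nonneg _
  have haA : |u (x, y)| ≤ |u (min (2 * x) 1, y)| + A :=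
    abs_le_abs_add_integral_partial_fst hu y hxm
  have haR : |u (x, y)| ≤ R := by
    simpa [hx1] using abs_le_abs_add_integral_partial_snd hu x hy.2
  have hwR : w * R ≤ ∫ s in Icc (0 : ℝ) 1, w * |fderiv ℝ u (x, s) (0, 1)| := by
    rw [← intervalIntegral.integral_const_mul]
    exact intervalIntegral_le_setIntegral_Icc hy.2 (Icc_subset_Icc_left hy.1)
      (Continuous.integrableOn_Icc (by fun_prop)) fun _ _ => by positivity
  have hwA :
      w * A ≤ 2 ^ |α| * ∫ t in Icc (0 : ℝ) 1, |t| ^ α * |fderiv ℝ u (t, y) (1, 0)| :=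
    abs_rpow_mul_integral_le_two_rpow_abs_mul hα (by fun_prop) (fun _ => abs_nonneg _) hx
  have hR : 0 ≤ w * R := mul_nonneg hw ((abs_nonneg _).trans haR)
  have key := sq_le_of_le_add_of_le hl (mul_nonneg hw (abs_nonneg _)) (mul_nonneg hw hA)
    (mul_add w _ A ▸ mul_le_mul_of_nonneg_left haA hw) (mul_le_mul_of_nonneg_left haR hw)
  rw [abs_rpow_mul_abs_sq, abs_rpow_mul_abs_sq] at key
  nlinarith [mul_le_mul hwR hwA (mul_nonneg hw hA) (hR.trans hwR)]

lemma integral_weighted_sq_le {α : ℝ} (hα : -(1 / 2) < α) (hu : ContDiff ℝ 1 u)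
    (hedge : ∀ t ∈ Icc (0 : ℝ) 1, u (1, t) = 0 ∧ u (t, 1) = 0) :
    ∫ p in □, |p.1| ^ (2 * α) * u p ^ 2 ≤
      2 ^ (-(α + 1 / 2)) * (∫ p in □, |p.1| ^ (2 * α) * u p ^ 2) +
        2 ^ |α| * (∫ p in □, |p.1| ^ α * |fderiv ℝ u p (1, 0)|) *
          ∫ p in □, |p.1| ^ α * |fderiv ℝ u p (0, 1)| := by
  have hl2 : ((2 : ℝ) ^ (-(α + 1 / 2))) ^ 2 = 2 ^ (-(2 * α + 1)) := by
    rw [← rpow_natCast, ← rpow_mul zero_le_two]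
    ring_nf
  set l : ℝ := 2 ^ (-(α + 1 / 2))
  have hl : 0 < l := by positivity
  have hcd := hu.continuous_fderiv one_ne_zero
  have hcu := hu.continuous
  have hF0 : IntegrableOn (fun p => |p.1| ^ (2 * α) * u p ^ 2) □ :=
    integrableOn_abs_fst_rpow_mul (by linarith) (by fun_prop)
  have hF1 : IntegrableOn (fun p => |p.1| ^ (2 * α) * u (min (2 * p.1) 1, p.2) ^ 2) □ :=
    integrableOn_abs_fst_rpow_mul (by linarith) (by fun_prop)
  have hD1 := integrableOn_abs_fst_rpow_mul (β := α) (by linarith)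
    (g := fun p => |fderiv ℝ u p (1, 0)|) (by fun_prop)
  have hD2 := integrableOn_abs_fst_rpow_mul (β := α) (by linarith)
    (g := fun p => |fderiv ℝ u p (0, 1)|) (by fun_prop)
  rw [IntegrableOn, volume_restrict_Icc_prodMk] at hD1 hD2
  have hT : IntegrableOn (fun p =>
      (∫ s in Icc (0 : ℝ) 1, |p.1| ^ α * |fderiv ℝ u (p.1, s) (0, 1)|) *
        ∫ t in Icc (0 : ℝ) 1, |t| ^ α * |fderiv ℝ u (t, p.2) (1, 0)|) □ := by
    rw [IntegrableOn, volume_restrict_Icc_prodMk]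
    exact hD2.integral_prod_left.mul_prod hD1.integral_prod_right
  have hT_eq : ∫ p in □,
        (∫ s in Icc (0 : ℝ) 1, |p.1| ^ α * |fderiv ℝ u (p.1, s) (0, 1)|) *
          ∫ t in Icc (0 : ℝ) 1, |t| ^ α * |fderiv ℝ u (t, p.2) (1, 0)| =
      (∫ p in □, |p.1| ^ α * |fderiv ℝ u p (0, 1)|) *
        ∫ p in □, |p.1| ^ α * |fderiv ℝ u p (1, 0)| := by
    rw [volume_restrict_Icc_prodMk, integral_prod_mul
      (fun x => ∫ s in Icc (0 : ℝ) 1, |x| ^ α * |fderiv ℝ u (x, s) (0, 1)|)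
      (fun y => ∫ t in Icc (0 : ℝ) 1, |t| ^ α * |fderiv ℝ u (t, y) (1, 0)|),
      integral_prod _ hD2, integral_prod_symm _ hD1]
  have hdil : ∫ p in □, |p.1| ^ (2 * α) * u (min (2 * p.1) 1, p.2) ^ 2 =
      l ^ 2 * ∫ p in □, |p.1| ^ (2 * α) * u p ^ 2 := by
    rw [setIntegral_unitSquare_comp_min_two_mul (φ := fun p => u p ^ 2) (by linarith)
      (by fun_prop) fun t ht => by simp [(hedge t ht).1], hl2]
  have hmajorant := ((hF0.const_mul (l / 2)).fun_add (hF1.const_mul (1 / (2 * l)))).fun_add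
    (hT.const_mul (2 ^ |α|))
  calc ∫ p in □, |p.1| ^ (2 * α) * u p ^ 2
      ≤ ∫ p in □, (l / 2 * (|p.1| ^ (2 * α) * u p ^ 2) +
          1 / (2 * l) * (|p.1| ^ (2 * α) * u (min (2 * p.1) 1, p.2) ^ 2) +
          2 ^ |α| * ((∫ s in Icc (0 : ℝ) 1, |p.1| ^ α * |fderiv ℝ u (p.1, s) (0, 1)|) *
            ∫ t in Icc (0 : ℝ) 1, |t| ^ α * |fderiv ℝ u (t, p.2) (1, 0)|)) :=
        setIntegral_mono_on hF0 hmajorant measurableSet_Icc fun p hp =>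
          weighted_sq_le (by linarith) hu hl ⟨hp.1.1, hp.2.1⟩ ⟨hp.1.2, hp.2.2⟩
            (hedge p.1 ⟨hp.1.1, hp.2.1⟩).2
    _ = _ := by
        rw [integral_add ((hF0.const_mul _).fun_add (hF1.const_mul _)) (hT.const_mul _),
          integral_add (hF0.const_mul _) (hF1.const_mul _), integral_const_mul,
          integral_const_mul, integral_const_mul, hdil, hT_eq]
        field_simp
        ring

end

/-- For `α > -1/2`, one has
`‖|x₁|^α u‖²_{L²([0,1]²)} ≤ C ‖|x₁|^α ∂₁u‖_{L¹([0,1]²)} ‖|x₁|^α ∂₂u‖_{L¹([0,1]²)}`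
for all `u ∈ C¹([0,1]²)` vanishing on the sides `x₁ = 1` and `x₂ = 1`. -/
theorem weighted_square_inequality (α : ℝ) (hα : -(1/2 : ℝ) < α) :
    ∃ C : ℝ, 0 < C ∧ ∀ u : ℝ × ℝ → ℝ, ContDiff ℝ 1 u →
      (∀ t ∈ Set.Icc (0 : ℝ) 1, u (1, t) = 0 ∧ u (t, 1) = 0) →
      (∫ x in Set.Icc ((0 : ℝ), (0 : ℝ)) (1, 1), (|x.1| ^ α * |u x|) ^ (2 : ℝ)) ≤
        C * (∫ x in Set.Icc ((0 : ℝ), (0 : ℝ)) (1, 1),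
              |x.1| ^ α * |fderiv ℝ u x (1, 0)|) *
            (∫ x in Set.Icc ((0 : ℝ), (0 : ℝ)) (1, 1),
              |x.1| ^ α * |fderiv ℝ u x (0, 1)|) := by
  have hl : (2 : ℝ) ^ (-(α + 1 / 2)) < 1 := rpow_lt_one_of_one_lt_of_neg one_lt_two (by linarith)
  refine ⟨2 ^ |α| / (1 - 2 ^ (-(α + 1 / 2))), div_pos (by positivity) (by linarith),
    fun u hu hedge => ?_⟩
  simp_rw [rpow_two, abs_rpow_mul_abs_sq]
  rw [div_mul_eq_mul_div, div_mul_eq_mul_div, le_div_iff₀ (by linarith)]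
  linarith [integral_weighted_sq_le hα hu hedge]

end
end

section
/- Let s, p, q, a, γ1, γ2, γ3, α, μ, β be real numbers with s,q>0, p≥1, 0≤a≤1, and let p' be defined by 1/p + 1/p' = 1. Define 1/s̄ = 1/s + 1/p', p̄ = 1, 1/q̄ = s/(q s̄), ā = a s /((1−a) s̄ + a s), γ̄1 = γ1 s/s̄, γ̄2 = γ1 s/p' + γ2, γ̄3 = γ3 s/s̄, ᾱ = α s/s̄, μ̄ = α s/p' + μ, β̄ = β s/s̄. Then: (i) if n ≥ 1 and (s,p,q,a,γ1,γ2,γ3) satisfy conditions (B1)–(B5), then (s̄,p̄,q̄,ā,γ̄1,γ̄2,γ̄3) also satisfy (B1)–(B5); (ii) if n ≥ 2 and (s,p,q,a,γ1,γ2,γ3,α,μ,β) satisfy conditions (A1)–(A8), then (s̄,p̄,q̄,ā,γ̄1,γ̄2,γ̄3,ᾱ,μ̄,β̄) also satisfy (A1)–(A8); (iii) 1/s ≤ a/p+(1−a)/q if and only if 1/s̄ ≤ ā/p̄+(1−ā)/q̄, and 1/s ≥ a(1/p−1/n)+(1−a)/q if and only if 1/s̄ ≥ ā(1−1/n)+(1−ā)/q̄.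 Moreover 0 < s̄ < s whenever p > 1, and 0 < s̄ ≤ s always. -/
/-!
Put `r = s / s̄ = 1 + s/p' ≥ 1`. Each condition compares an "`s`-quantity" `L` with the
convex combination `a P + (1 - a) Q` of a "`p`-quantity" `P` and a "`q`-quantity" `Q`, and the
transformation acts on these by `L ↦ r L`, `P ↦ P + (r - 1) L`, `Q ↦ r Q`,
`a ↦ ā = a r / (1 - a + a r)`. Under it the gap `L - (a P + (1 - a) Q)` is multiplied by the
positive factor `r / (1 - a + a r)`, so every equality, inequality and equality case is preserved;
positivity of `P + (r - 1) L` follows from `r ≥ 1`.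
-/

open Real

noncomputable section

/-- Condition (B1). -/
def B1 (s p q a : ℝ) : Prop := 0 < s ∧ 0 < q ∧ 1 ≤ p ∧ 0 ≤ a ∧ a ≤ 1

/-- Condition (B2). -/
def B2 (n : ℕ) (s p q g1 g2 g3 : ℝ) : Prop :=
  0 < 1/s + g1/(n : ℝ) ∧ 0 < 1/p + g2/(n : ℝ) ∧ 0 < 1/q + g3/(n : ℝ)

/-- Condition (B3). -/
def B3 (n : ℕ) (s p q a g1 g2 g3 : ℝ) : Prop :=
  1/s + g1/(n : ℝ) = a * (1/p + (g2 - 1)/(n : ℝ)) + (1 - a) * (1/q + g3/(n : ℝ))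

/-- Condition (B4). -/
def B4 (a g1 g2 g3 : ℝ) : Prop := g1 ≤ a * g2 + (1 - a) * g3

/-- Condition (B5). -/
def B5 (n : ℕ) (s p q a g1 g2 g3 : ℝ) : Prop :=
  (a = 0 ∨ a = 1 ∨
    (1/s + g1/(n : ℝ) = 1/p + (g2 - 1)/(n : ℝ) ∧
      1/p + (g2 - 1)/(n : ℝ) = 1/q + g3/(n : ℝ))) →
  1/s ≤ a/p + (1 - a)/q

/-- Conditions (B1)-(B5) combined. -/
def condB (n : ℕ) (s p q a g1 g2 g3 : ℝ) : Prop :=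
  B1 s p q a ∧ B2 n s p q g1 g2 g3 ∧ B3 n s p q a g1 g2 g3 ∧
    B4 a g1 g2 g3 ∧ B5 n s p q a g1 g2 g3

/-- Condition (A2). -/
def A2 (n : ℕ) (s p q α μ β : ℝ) : Prop :=
  0 < 1/s + α/((n : ℝ) - 1) ∧ 0 < 1/p + μ/((n : ℝ) - 1) ∧ 0 < 1/q + β/((n : ℝ) - 1)

/-- Condition (A3). -/
def A3 (n : ℕ) (s p q g1 g2 g3 α μ β : ℝ) : Prop :=
  0 < 1/s + (α + g1)/(n : ℝ) ∧ 0 < 1/p + (μ + g2)/(n : ℝ) ∧ 0 < 1/q + (β + g3)/(n : ℝ)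

/-- Condition (A4). -/
def A4 (n : ℕ) (s p q a g1 g2 g3 α μ β : ℝ) : Prop :=
  1/s + (g1 + α)/(n : ℝ) =
    a * (1/p + (g2 + μ - 1)/(n : ℝ)) + (1 - a) * (1/q + (g3 + β)/(n : ℝ))

/-- Condition (A6). -/
def A6 (a g1 g2 g3 α μ β : ℝ) : Prop :=
  g1 + α ≤ a * (g2 + μ) + (1 - a) * (g3 + β)

/-- Condition (A7). -/
def A7 (n : ℕ) (s p q a α μ β : ℝ) : Prop :=
  a * (1/p + (μ - 1)/((n : ℝ) - 1)) + (1 - a) * (1/q + β/((n : ℝ) - 1)) ≤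
    1/s + α/((n : ℝ) - 1)

/-- Condition (A8). -/
def A8 (n : ℕ) (s p q a g1 g2 g3 α μ β : ℝ) : Prop :=
  (a = 0 ∨ a = 1 ∨
    (1/p + (g2 + μ - 1)/(n : ℝ) = 1/q + (g3 + β)/(n : ℝ) ∧
      1/q + (g3 + β)/(n : ℝ) = 1/s + (g1 + α)/(n : ℝ)) ∨
    1/s + α/((n : ℝ) - 1) =
      a * (1/p + (μ - 1)/((n : ℝ) - 1)) + (1 - a) * (1/q + β/((n : ℝ) - 1))) →
  1/s ≤ a/p + (1 - a)/q

/-- Conditions (A1)-(A8) combined. -/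
def condA (n : ℕ) (s p q a g1 g2 g3 α μ β : ℝ) : Prop :=
  B1 s p q a ∧ A2 n s p q α μ β ∧ A3 n s p q g1 g2 g3 α μ β ∧
    A4 n s p q a g1 g2 g3 α μ β ∧ B4 a g1 g2 g3 ∧ A6 a g1 g2 g3 α μ β ∧
    A7 n s p q a α μ β ∧ A8 n s p q a g1 g2 g3 α μ β

/-- `s̄`, defined by `1/s̄ = 1/s + 1/p'` where `1/p + 1/p' = 1` (so `1/p' = 1 - 1/p`). -/
def sbar (s p : ℝ) : ℝ := (1/s + (1 - 1/p))⁻¹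

/-- `q̄`, defined by `1/q̄ = s/(q s̄)`. -/
def qbar (s p q : ℝ) : ℝ := q * sbar s p / s

/-- `ā = a s / ((1-a) s̄ + a s)`. -/
def abar (s p a : ℝ) : ℝ := a * s / ((1 - a) * sbar s p + a * s)

def reweight (r a : ℝ) : ℝ := a * r / (1 - a + a * r)

section Reweight

variable {r a : ℝ}

theorem reweight_denom_pos (hr : 0 < r) (ha0 : 0 ≤ a) (ha1 : a ≤ 1) : 0 < 1 - a + a * r := by
  rcases ha1.lt_or_eq with ha1 | rfl
  · nlinarith [mul_nonneg ha0 hr.le]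
  · simpa using hr

theorem one_sub_reweight (hw : 1 - a + a * r ≠ 0) :
    1 - reweight r a = (1 - a) / (1 - a + a * r) := by
  rw [reweight]; field_simp; ring

theorem reweight_nonneg (hr : 0 < r) (ha0 : 0 ≤ a) (ha1 : a ≤ 1) : 0 ≤ reweight r a :=
  div_nonneg (mul_nonneg ha0 hr.le) (reweight_denom_pos hr ha0 ha1).le

theorem reweight_le_one (hr : 0 < r) (ha0 : 0 ≤ a) (ha1 : a ≤ 1) : reweight r a ≤ 1 := by
  have hw := reweight_denom_pos hr ha0 ha1
  have : 0 ≤ 1 - reweight r a := by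
    rw [one_sub_reweight hw.ne']; exact div_nonneg (by linarith) hw.le
  linarith

theorem reweight_eq_zero_iff (hr : 0 < r) (ha0 : 0 ≤ a) (ha1 : a ≤ 1) :
    reweight r a = 0 ↔ a = 0 := by
  rw [reweight, div_eq_zero_iff, mul_eq_zero]
  have := reweight_denom_pos hr ha0 ha1
  constructor
  · rintro ((h | h) | h) <;> first | exact h | linarith
  · exact fun h => Or.inl (Or.inl h)

theorem reweight_eq_one_iff (hr : 0 < r) (ha0 : 0 ≤ a) (ha1 : a ≤ 1) :
    reweight r a = 1 ↔ a = 1 := by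
  have hw := reweight_denom_pos hr ha0 ha1
  rw [← sub_eq_zero, ← neg_eq_zero, neg_sub, one_sub_reweight hw.ne', div_eq_zero_iff]
  constructor
  · rintro (h | h) <;> linarith
  · intro h; left; linarith

theorem sub_reweight_combination (hw : 1 - a + a * r ≠ 0) (L P Q : ℝ) :
    r * L - (reweight r a * (P + (r - 1) * L) + (1 - reweight r a) * (r * Q)) =
      r / (1 - a + a * r) * (L - (a * P + (1 - a) * Q)) := by
  rw [one_sub_reweight hw, reweight, div_mul_eq_mul_div, div_mul_eq_mul_div, div_mul_eq_mul_div,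
    ← add_div, eq_div_iff hw, sub_mul, div_mul_cancel₀ _ hw]
  ring

theorem eq_and_eq_of_shift {L P Q : ℝ} (hr : r ≠ 0) (h₁ : r * L = P + (r - 1) * L)
    (h₂ : P + (r - 1) * L = r * Q) : L = P ∧ P = Q := by
  have hLP : L = P := by linear_combination h₁
  refine ⟨hLP, mul_left_cancel₀ hr ?_⟩
  linear_combination h₂ - (r - 1) * hLP

variable (hr : 0 < r) (ha0 : 0 ≤ a) (ha1 : a ≤ 1) {L P Q : ℝ}
include hr ha0 ha1

theorem combination_le_iff :
    a * P + (1 - a) * Q ≤ L ↔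
      reweight r a * (P + (r - 1) * L) + (1 - reweight r a) * (r * Q) ≤ r * L := by
  have hw := reweight_denom_pos hr ha0 ha1
  rw [← sub_nonneg, ← sub_nonneg (b := reweight r a * _ + _), sub_reweight_combination hw.ne',
    mul_nonneg_iff_of_pos_left (div_pos hr hw)]

theorem le_combination_iff :
    L ≤ a * P + (1 - a) * Q ↔
      r * L ≤ reweight r a * (P + (r - 1) * L) + (1 - reweight r a) * (r * Q) := by
  have hw := reweight_denom_pos hr ha0 ha1
  rw [← sub_nonneg, ← sub_nonneg (a := reweight r a * _ + _), ← neg_sub, ← neg_sub (r * L),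
    sub_reweight_combination hw.ne', ← mul_neg, mul_nonneg_iff_of_pos_left (div_pos hr hw)]

theorem eq_combination_iff :
    L = a * P + (1 - a) * Q ↔
      r * L = reweight r a * (P + (r - 1) * L) + (1 - reweight r a) * (r * Q) := by
  have hw := reweight_denom_pos hr ha0 ha1
  rw [← sub_eq_zero, ← sub_eq_zero (a := r * L), sub_reweight_combination hw.ne',
    mul_eq_zero, or_iff_right (div_pos hr hw).ne']

end Reweight

section Transformed

variable {s p a : ℝ}

theorem div_sbar (hs : s ≠ 0) : s / sbar s p = 1 + s * (1 - 1 / p) := by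
  rw [sbar, div_inv_eq_mul]; field_simp

theorem one_le_div_sbar (hs : 0 < s) (hp : 1 ≤ p) : 1 ≤ s / sbar s p := by
  have : 0 ≤ 1 - 1 / p := sub_nonneg.2 (div_le_one_of_le₀ hp (by linarith))
  rw [div_sbar hs.ne']
  nlinarith

theorem one_lt_div_sbar (hs : 0 < s) (hp : 1 < p) : 1 < s / sbar s p := by
  have : 0 < 1 - 1 / p := sub_pos.2 ((div_lt_one (by linarith)).2 hp)
  rw [div_sbar hs.ne']
  nlinarith

theorem sbar_pos (hs : 0 < s) (hp : 1 ≤ p) : 0 < sbar s p := by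
  have : 0 ≤ 1 - 1 / p := sub_nonneg.2 (div_le_one_of_le₀ hp (by linarith))
  rw [sbar]; positivity

theorem one_div_sbar (hs : s ≠ 0) : 1 / sbar s p = s / sbar s p * (1 / s) := by
  field_simp

theorem mul_div_sbar (x : ℝ) : x * s / sbar s p = s / sbar s p * x := by
  rw [mul_div_assoc, mul_comm]

theorem div_qbar (q x : ℝ) : x / qbar s p q = s / sbar s p * (x / q) := by
  rw [qbar, div_div_eq_mul_div]; ring

theorem mul_one_sub_one_div (hs : s ≠ 0) (x : ℝ) :
    x * s * (1 - 1 / p) = (s / sbar s p - 1) * x := by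
  rw [div_sbar hs]; ring

-- `1/p + 1/p' = 1`, with `1/p' = (s/s̄ - 1)/s`.
theorem one_eq_one_div_add (hs : s ≠ 0) : 1 = 1 / p + (s / sbar s p - 1) * (1 / s) := by
  rw [div_sbar hs]; field_simp; ring

theorem abar_eq_reweight (h : sbar s p ≠ 0) : abar s p a = reweight (s / sbar s p) a := by
  rw [abar, reweight]; field_simp

theorem sbar_le (hs : 0 < s) (hp : 1 ≤ p) : sbar s p ≤ s :=
  (one_le_div (sbar_pos hs hp)).1 (one_le_div_sbar hs hp)

theorem sbar_lt (hs : 0 < s) (hp : 1 < p) : sbar s p < s :=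
  (one_lt_div (sbar_pos hs hp.le)).1 (one_lt_div_sbar hs hp)

theorem inv_le_combination_iff_transformed (hs : 0 < s) (hp : 1 ≤ p) (ha0 : 0 ≤ a) (ha1 : a ≤ 1)
    (q : ℝ) :
    1 / s ≤ a / p + (1 - a) / q ↔
      1 / sbar s p ≤ abar s p a / 1 + (1 - abar s p a) / qbar s p q := by
  have hr := one_le_div_sbar hs hp
  have hone := one_eq_one_div_add (p := p) hs.ne'
  rw [abar_eq_reweight (sbar_pos hs hp).ne', one_div_sbar hs.ne', div_qbar, div_one]
  set r := s / sbar s p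
  convert le_combination_iff (by linarith : 0 < r) ha0 ha1 (L := 1 / s) (P := 1 / p) (Q := 1 / q)
    using 2
  · ring
  · linear_combination reweight r a * hone

theorem combination_le_inv_iff_transformed (hs : 0 < s) (hp : 1 ≤ p) (ha0 : 0 ≤ a)
    (ha1 : a ≤ 1) (q c : ℝ) :
    a * (1 / p - 1 / c) + (1 - a) / q ≤ 1 / s ↔
      abar s p a * (1 - 1 / c) + (1 - abar s p a) / qbar s p q ≤ 1 / sbar s p := by
  have hr := one_le_div_sbar hs hp
  have hone := one_eq_one_div_add (p := p) hs.ne'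
  rw [abar_eq_reweight (sbar_pos hs hp).ne', one_div_sbar hs.ne', div_qbar]
  set r := s / sbar s p
  convert combination_le_iff (by linarith : 0 < r) ha0 ha1 (L := 1 / s) (P := 1 / p - 1 / c)
    (Q := 1 / q) using 2
  · ring
  · linear_combination reweight r a * hone

end Transformed

theorem condB_transformed {n : ℕ} {s p q a g1 g2 g3 : ℝ} (h : condB n s p q a g1 g2 g3) :
    condB n (sbar s p) 1 (qbar s p q) (abar s p a)
      (g1 * s / sbar s p) (g1 * s * (1 - 1 / p) + g2) (g3 * s / sbar s p) := by
  obtain ⟨⟨hs, hq, hp, ha0, ha1⟩, ⟨hL, hP, hQ⟩, hB3, hB4, hB5⟩ := h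
  have hS := sbar_pos hs hp
  have hone := one_eq_one_div_add (p := p) hs.ne'
  have hr : 0 < s / sbar s p := by linarith [one_le_div_sbar hs hp]
  have hshift : 0 ≤ (s / sbar s p - 1) * (1 / s + g1 / n) :=
    mul_nonneg (sub_nonneg.2 (one_le_div_sbar hs hp)) hL.le
  have hB5' : B5 n (sbar s p) 1 (qbar s p q) (abar s p a)
      (g1 * s / sbar s p) (g1 * s * (1 - 1 / p) + g2) (g3 * s / sbar s p) := by
    intro hcase
    refine (inv_le_combination_iff_transformed hs hp ha0 ha1 q).1 (hB5 ?_)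
    simp only [abar_eq_reweight hS.ne', one_div_sbar hs.ne', mul_div_sbar, div_qbar,
      mul_one_sub_one_div hs.ne', div_one] at hcase
    rcases hcase with h | h | ⟨h₁, h₂⟩
    · exact Or.inl ((reweight_eq_zero_iff hr ha0 ha1).1 h)
    · exact Or.inr (Or.inl ((reweight_eq_one_iff hr ha0 ha1).1 h))
    · exact Or.inr (Or.inr (eq_and_eq_of_shift hr.ne' (by linear_combination h₁ + hone)
        (by linear_combination h₂ - hone)))
  refine ⟨⟨hS, by rw [qbar]; positivity, le_rfl, ?_, ?_⟩, ⟨?_, ?_, ?_⟩, ?_, ?_, hB5'⟩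
  all_goals simp only [B3, B4, abar_eq_reweight hS.ne', one_div_sbar hs.ne', mul_div_sbar,
    div_qbar, mul_one_sub_one_div hs.ne', div_one]
  · exact reweight_nonneg hr ha0 ha1
  · exact reweight_le_one hr ha0 ha1
  · linear_combination mul_pos hr hL
  · linear_combination hP + hshift - hone
  · linear_combination mul_pos hr hQ
  · linear_combination (eq_combination_iff hr ha0 ha1).1 hB3 - reweight (s / sbar s p) a * hone
  · linear_combination (le_combination_iff hr ha0 ha1).1 hB4

theorem condA_transformed {n : ℕ} {s p q a g1 g2 g3 α μ β : ℝ}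
    (h : condA n s p q a g1 g2 g3 α μ β) :
    condA n (sbar s p) 1 (qbar s p q) (abar s p a)
      (g1 * s / sbar s p) (g1 * s * (1 - 1 / p) + g2) (g3 * s / sbar s p)
      (α * s / sbar s p) (α * s * (1 - 1 / p) + μ) (β * s / sbar s p) := by
  obtain ⟨⟨hs, hq, hp, ha0, ha1⟩, ⟨hL₂, hP₂, hQ₂⟩, ⟨hL₃, hP₃, hQ₃⟩, hA4, hB4, hA6, hA7, hA8⟩ := h
  have hS := sbar_pos hs hp
  have hone := one_eq_one_div_add (p := p) hs.ne'
  have hr : 0 < s / sbar s p := by linarith [one_le_div_sbar hs hp]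
  have hshift₂ : 0 ≤ (s / sbar s p - 1) * (1 / s + α / (n - 1)) :=
    mul_nonneg (sub_nonneg.2 (one_le_div_sbar hs hp)) hL₂.le
  have hshift₃ : 0 ≤ (s / sbar s p - 1) * (1 / s + (α + g1) / n) :=
    mul_nonneg (sub_nonneg.2 (one_le_div_sbar hs hp)) hL₃.le
  have hA8' : A8 n (sbar s p) 1 (qbar s p q) (abar s p a)
      (g1 * s / sbar s p) (g1 * s * (1 - 1 / p) + g2) (g3 * s / sbar s p)
      (α * s / sbar s p) (α * s * (1 - 1 / p) + μ) (β * s / sbar s p) := by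
    intro hcase
    refine (inv_le_combination_iff_transformed hs hp ha0 ha1 q).1 (hA8 ?_)
    simp only [abar_eq_reweight hS.ne', one_div_sbar hs.ne', mul_div_sbar, div_qbar,
      mul_one_sub_one_div hs.ne', div_one] at hcase
    rcases hcase with h | h | ⟨h₁, h₂⟩ | h
    · exact Or.inl ((reweight_eq_zero_iff hr ha0 ha1).1 h)
    · exact Or.inr (Or.inl ((reweight_eq_one_iff hr ha0 ha1).1 h))
    · obtain ⟨hLP, hPQ⟩ := eq_and_eq_of_shift (L := 1 / s + (g1 + α) / n)
        (P := 1 / p + (g2 + μ - 1) / n) (Q := 1 / q + (g3 + β) / n) hr.ne'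
        (by linear_combination -h₁ - h₂ + hone) (by linear_combination h₁ - hone)
      exact Or.inr (Or.inr (Or.inl ⟨hPQ, (hLP.trans hPQ).symm⟩))
    · exact Or.inr (Or.inr (Or.inr ((eq_combination_iff hr ha0 ha1).2
        (by linear_combination h + reweight (s / sbar s p) a * hone))))
  refine ⟨⟨hS, by rw [qbar]; positivity, le_rfl, ?_, ?_⟩, ⟨?_, ?_, ?_⟩, ⟨?_, ?_, ?_⟩,
    ?_, ?_, ?_, ?_, hA8'⟩
  all_goals simp only [A4, B4, A6, A7, abar_eq_reweight hS.ne', one_div_sbar hs.ne', mul_div_sbar,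
    div_qbar, mul_one_sub_one_div hs.ne', div_one]
  · exact reweight_nonneg hr ha0 ha1
  · exact reweight_le_one hr ha0 ha1
  · linear_combination mul_pos hr hL₂
  · linear_combination hP₂ + hshift₂ - hone
  · linear_combination mul_pos hr hQ₂
  · linear_combination mul_pos hr hL₃
  · linear_combination hP₃ + hshift₃ - hone
  · linear_combination mul_pos hr hQ₃
  · linear_combination (eq_combination_iff hr ha0 ha1).1 hA4 - reweight (s / sbar s p) a * hone
  · linear_combination (le_combination_iff hr ha0 ha1).1 hB4
  · linear_combination (le_combination_iff hr ha0 ha1).1 hA6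
  · linear_combination (combination_le_iff hr ha0 ha1).1 hA7 + reweight (s / sbar s p) a * hone

theorem parameter_transformation_general
    (s p q a g1 g2 g3 α μ β : ℝ)
    (hs : 0 < s) (hp : 1 ≤ p) (ha0 : 0 ≤ a) (ha1 : a ≤ 1) :
    (∀ n : ℕ, 1 ≤ n → condB n s p q a g1 g2 g3 →
      condB n (sbar s p) 1 (qbar s p q) (abar s p a)
        (g1 * s / sbar s p) (g1 * s * (1 - 1/p) + g2) (g3 * s / sbar s p)) ∧
    (∀ n : ℕ, 2 ≤ n → condA n s p q a g1 g2 g3 α μ β →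
      condA n (sbar s p) 1 (qbar s p q) (abar s p a)
        (g1 * s / sbar s p) (g1 * s * (1 - 1/p) + g2) (g3 * s / sbar s p)
        (α * s / sbar s p) (α * s * (1 - 1/p) + μ) (β * s / sbar s p)) ∧
    (1/s ≤ a/p + (1 - a)/q ↔
      1/(sbar s p) ≤ abar s p a / 1 + (1 - abar s p a)/(qbar s p q)) ∧
    (∀ n : ℕ, 1 ≤ n →
      (a * (1/p - 1/(n : ℝ)) + (1 - a)/q ≤ 1/s ↔
        abar s p a * (1 - 1/(n : ℝ)) + (1 - abar s p a)/(qbar s p q) ≤ 1/(sbar s p))) ∧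
    (1 < p → 0 < sbar s p ∧ sbar s p < s) ∧
    (0 < sbar s p ∧ sbar s p ≤ s) :=
  ⟨fun _ _ h => condB_transformed h,
    fun _ _ h => condA_transformed h,
    inv_le_combination_iff_transformed hs hp ha0 ha1 q,
    fun n _ => combination_le_inv_iff_transformed hs hp ha0 ha1 q n,
    fun hp' => ⟨sbar_pos hs hp, sbar_lt hs hp'⟩,
    sbar_pos hs hp, sbar_le hs hp⟩

/-- Lemma 7.1 (Lemma A.1): the transformed parameters
`s̄, p̄ = 1, q̄, ā, γ̄₁, γ̄₂, γ̄₃, ᾱ, μ̄, β̄` inherit conditions (B) and (A), and the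
relations `1/s ≤ a/p + (1-a)/q` and `1/s ≥ a(1/p - 1/n) + (1-a)/q` are preserved. -/
theorem parameter_transformation
    (s p q a g1 g2 g3 α μ β : ℝ)
    (hs : 0 < s) (hq : 0 < q) (hp : 1 ≤ p) (ha0 : 0 ≤ a) (ha1 : a ≤ 1) :
    (∀ n : ℕ, 1 ≤ n → condB n s p q a g1 g2 g3 →
      condB n (sbar s p) 1 (qbar s p q) (abar s p a)
        (g1 * s / sbar s p) (g1 * s * (1 - 1/p) + g2) (g3 * s / sbar s p)) ∧
    (∀ n : ℕ, 2 ≤ n → condA n s p q a g1 g2 g3 α μ β →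
      condA n (sbar s p) 1 (qbar s p q) (abar s p a)
        (g1 * s / sbar s p) (g1 * s * (1 - 1/p) + g2) (g3 * s / sbar s p)
        (α * s / sbar s p) (α * s * (1 - 1/p) + μ) (β * s / sbar s p)) ∧
    (1/s ≤ a/p + (1 - a)/q ↔
      1/(sbar s p) ≤ abar s p a / 1 + (1 - abar s p a)/(qbar s p q)) ∧
    (∀ n : ℕ, 1 ≤ n →
      (a * (1/p - 1/(n : ℝ)) + (1 - a)/q ≤ 1/s ↔
        abar s p a * (1 - 1/(n : ℝ)) + (1 - abar s p a)/(qbar s p q) ≤ 1/(sbar s p))) ∧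
    (1 < p → 0 < sbar s p ∧ sbar s p < s) ∧
    (0 < sbar s p ∧ sbar s p ≤ s) :=
  parameter_transformation_general s p q a g1 g2 g3 α μ β hs hp ha0 ha1

end
end
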